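/- For x₁ ∈ (0, 1] and x₂ ∈ [0, 1], let f(x₁, x₂) = √(log(1/x₁)) · e^{2πi x₂} ∈ ℂ. Then for every pair (k, l) ∈ ℕ² with (k, l) ≠ (0, 0), ∫_0^1 ∫_0^1 H_{k,l}(f(x₁, x₂), 1) dx₁ dx₂ = 0. -/

import Mathlib

open Real Complex

/-- the complex Hermite polynomials `H_{k,l}(z, c)` -/
noncomputable def complexHermite (k l : ℕ) (z : ℂ) (c : ℝ) : ℂ :=
  ∑ m ∈ Finset.range (min k l + 1),
    (Nat.factorial m : ℂ) * (Nat.choose k m : ℂ) * (Nat.choose l m : ℂ) *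
      (-(c : ℂ)) ^ m * z ^ (k - m) * (starRingEnd ℂ z) ^ (l - m)

/-- `f(x₁, x₂) = √(log(1/x₁)) e^{2πi x₂}` -/
noncomputable def fC (x₁ x₂ : ℝ) : ℂ :=
  (Real.sqrt (Real.log (1 / x₁)) : ℂ) * Complex.exp (2 * π * Complex.I * x₂)

/-!
Write `fC x₁ x₂ = r e^{iθ}` with `r = √(-log x₁)` and `θ = 2πx₂`. Every monomial of `H_{k,l}` has
the phase `e^{i(k-l)θ}`, so `H_{k,l}(r e^{iθ}, c) = H_{k,l}(r, c) e^{i(k-l)θ}` and the `x₂`-integral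
vanishes unless `k = l`. For `k = l`, `H_{k,k}(r, c)` is a polynomial in `r² = -log x₁`, and
`∫₀¹ (-log x)^j dx = Γ(j + 1) = j!` turns the `x₁`-integral into
`∑ m! C(k,m)² (-c)^m (k-m)! = k! (1 - c)^k`, which vanishes at `c = 1` for `k ≥ 1`.
-/

open MeasureTheory Set
open scoped Nat

theorem integral_neg_log_pow (n : ℕ) : ∫ x in (0:ℝ)..1, (-Real.log x) ^ n = n ! := by
  have hgamma : ∫ t in Ioi (0:ℝ), Real.exp (-t) * t ^ n = n ! := by
    rw [← Real.Gamma_nat_eq_factorial, Real.Gamma_eq_integral (by positivity)]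
    simp [← rpow_natCast]
  rw [intervalIntegral.integral_of_le zero_le_one, integral_Ioc_eq_integral_Ioo, ← Real.exp_zero,
    ← image_exp_Iio, integral_image_eq_integral_abs_deriv_smul measurableSet_Iio
      (fun t _ ↦ (Real.hasDerivAt_exp t).hasDerivWithinAt) Real.exp_injective.injOn, ← hgamma,
    ← integral_Iic_eq_integral_Iio, ← neg_zero, ← integral_comp_neg_Ioi]
  simp [abs_of_pos (Real.exp_pos _)]

theorem intervalIntegrable_neg_log_pow (n : ℕ) :
    IntervalIntegrable (fun x ↦ (-Real.log x) ^ n) volume 0 1 :=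
  intervalIntegral.intervalIntegrable_of_integral_ne_zero (by rw [integral_neg_log_pow]; positivity)

theorem integral_exp_int_mul_two_pi_mul_I (n : ℤ) :
    ∫ x in (0:ℝ)..1, exp (n * (2 * π * x : ℝ) * I) = if n = 0 then 1 else 0 := by
  split_ifs with hn
  · simp [hn]
  · have hc : (n * (2 * π) * I : ℂ) ≠ 0 := by simp [hn, Real.pi_ne_zero]
    simp_rw [show ∀ x : ℝ, (n * (2 * π * x : ℝ) * I : ℂ) = n * (2 * π) * I * x from
      fun x ↦ by push_cast; ring]
    rw [integral_exp_mul_complex hc, show (n * (2 * π) * I : ℂ) * (1 : ℝ) = n * (2 * π * I) by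
      push_cast; ring, exp_int_mul_two_pi_mul_I]
    simp

theorem complexHermite_mul_exp_mul_I (k l : ℕ) (z : ℂ) (c θ : ℝ) :
    complexHermite k l (z * exp (θ * I)) c
      = complexHermite k l z c * exp (((k : ℤ) - l : ℤ) * θ * I) := by
  rw [complexHermite, complexHermite, Finset.sum_mul]
  refine Finset.sum_congr rfl fun m hm ↦ ?_
  have hm : m ≤ min k l := Finset.mem_range_succ_iff.mp hm
  have hconj : starRingEnd ℂ (exp (θ * I)) = exp (-(θ * I)) := by
    rw [← exp_conj]; simp
  have hphase : exp (θ * I) ^ (k - m) * exp (-(θ * I)) ^ (l - m)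
      = exp (((k : ℤ) - l : ℤ) * θ * I) := by
    rw [← Complex.exp_nat_mul, ← Complex.exp_nat_mul, ← Complex.exp_add]
    push_cast [Nat.cast_sub (hm.trans (min_le_left k l)),
      Nat.cast_sub (hm.trans (min_le_right k l))]
    ring_nf
  rw [map_mul, hconj, mul_pow, mul_pow, ← hphase]
  ring

theorem complexHermite_self_sqrt (k : ℕ) (c : ℝ) {t : ℝ} (ht : 0 ≤ t) :
    complexHermite k k (√t) c
      = (∑ m ∈ Finset.range (k + 1), m ! * k.choose m ^ 2 * (-c) ^ m * t ^ (k - m) : ℝ) := by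
  rw [complexHermite, min_self]
  push_cast
  refine Finset.sum_congr rfl fun m _ ↦ ?_
  rw [conj_ofReal, mul_assoc, ← mul_pow, ← ofReal_mul, Real.mul_self_sqrt ht]
  ring

theorem sum_factorial_mul_choose_sq_mul_factorial {R : Type*} [CommSemiring R] (k : ℕ) (a : R) :
    ∑ m ∈ Finset.range (k + 1), m ! * k.choose m ^ 2 * a ^ m * (k - m)! = k ! * (1 + a) ^ k := by
  rw [add_comm 1 a, add_pow, Finset.mul_sum]
  refine Finset.sum_congr rfl fun m hm ↦ ?_
  have hfac : (k.choose m * m ! * (k - m)! : R) = k ! := by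
    rw [← Nat.cast_mul, ← Nat.cast_mul,
      Nat.choose_mul_factorial_mul_factorial (Finset.mem_range_succ_iff.mp hm)]
  rw [← hfac]
  ring

theorem integral_complexHermite_self_sqrt_neg_log (k : ℕ) (c : ℝ) :
    ∫ x in (0:ℝ)..1, complexHermite k k (√(-Real.log x)) c = (k ! * (1 - c) ^ k : ℝ) := by
  have hcongr : EqOn (fun x ↦ complexHermite k k (√(-Real.log x)) c)
      (fun x ↦ (∑ m ∈ Finset.range (k + 1),
        m ! * k.choose m ^ 2 * (-c) ^ m * (-Real.log x) ^ (k - m) : ℝ)) (uIcc 0 1) := by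
    intro x hx
    rw [uIcc_of_le zero_le_one] at hx
    exact complexHermite_self_sqrt k c (neg_nonneg.mpr (Real.log_nonpos hx.1 hx.2))
  rw [intervalIntegral.integral_congr hcongr, intervalIntegral.integral_ofReal,
    intervalIntegral.integral_finsetSum
      fun m _ ↦ (intervalIntegrable_neg_log_pow (k - m)).const_mul _]
  simp_rw [intervalIntegral.integral_const_mul, integral_neg_log_pow,
    sum_factorial_mul_choose_sq_mul_factorial, sub_eq_add_neg]

theorem integral_integral_complexHermite_fC (k l : ℕ) (c : ℝ) :
    ∫ x₁ in (0:ℝ)..1, ∫ x₂ in (0:ℝ)..1, complexHermite k l (fC x₁ x₂) c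
      = if k = l then ((k ! * (1 - c) ^ k : ℝ) : ℂ) else 0 := by
  have hinner (x₁ : ℝ) : ∫ x₂ in (0:ℝ)..1, complexHermite k l (fC x₁ x₂) c
      = if k = l then complexHermite k k (√(-Real.log x₁)) c else 0 := by
    have hf (x₂ : ℝ) : fC x₁ x₂ = √(-Real.log x₁) * exp ((2 * π * x₂ : ℝ) * I) := by
      rw [fC, one_div, Real.log_inv]; push_cast; ring_nf
    simp_rw [hf, complexHermite_mul_exp_mul_I, intervalIntegral.integral_const_mul,
      integral_exp_int_mul_two_pi_mul_I, sub_eq_zero, Nat.cast_inj]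
    split_ifs with hkl
    · rw [hkl, mul_one]
    · rw [mul_zero]
  simp_rw [hinner]
  split_ifs with hkl
  · exact integral_complexHermite_self_sqrt_neg_log k c
  · simp

theorem integral_complexHermite_eq_zero (k l : ℕ) (h : (k, l) ≠ (0, 0)) :
    (∫ x₁ in (0:ℝ)..1, ∫ x₂ in (0:ℝ)..1, complexHermite k l (fC x₁ x₂) 1) = 0 := by
  rw [integral_integral_complexHermite_fC]
  split_ifs with hkl
  · subst hkl
    have hk : k ≠ 0 := fun hk ↦ h (by rw [hk])
    simp [hk]
  · rfl
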